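/- arXiv:2603.00927 — 3 statements merged into one kernel-verified Lean document; each statement's English description precedes it below -/
import Mathlib

section
/- Let Σ be a d×d symmetric positive definite matrix and let Z ~ N_d(0, Σ). Then for every ε > √(tr Σ), P(‖Z‖ > ε) ≤ exp(−(1/2)(ε − √(tr Σ))² ‖Σ‖_op⁻¹). -/
/-! Chernoff bound through the exponential moment of `‖Z‖²`. In an orthonormal eigenbasis of `Σ`
the density factorises, so `E exp(s‖Z‖²) = ∏ᵢ (1 - 2sλᵢ)^(-1/2)` whenever `2sλᵢ < 1`; since
`(1 - t)⁻¹ ≤ exp (t / (1 - c))` for `0 ≤ t ≤ c < 1`, this is at most `exp (s tr Σ / (1 - 2s‖Σ‖))`.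
Markov's inequality then gives `P(‖Z‖ > ε) ≤ exp (-sε² + s tr Σ / (1 - 2s‖Σ‖))`, and the choice
`s = (ε - √tr Σ) / (2‖Σ‖ε)`, for which `1 - 2s‖Σ‖ = √tr Σ / ε`, turns the exponent into
`-(ε - √tr Σ)² / (2‖Σ‖)`. -/

open MeasureTheory Matrix

noncomputable section

/-- Gaussian measure `N(m, S)` on `EuclideanSpace ℝ ι`, defined through its Lebesgue density
`(2π)^{-d/2} det(S)^{-1/2} exp(-(1/2) (x-m)ᵀ S⁻¹ (x-m))`. -/
def gaussianMeasure {ι : Type*} [Fintype ι] [DecidableEq ι]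
    (m : EuclideanSpace ℝ ι) (S : Matrix ι ι ℝ) : Measure (EuclideanSpace ℝ ι) :=
  volume.withDensity fun x =>
    ENNReal.ofReal ((Real.sqrt ((2 * Real.pi) ^ Fintype.card ι * S.det))⁻¹ *
      Real.exp (-(1 / 2) * (inner ℝ (x - m) ((Matrix.toEuclideanCLM (𝕜 := ℝ) S⁻¹) (x - m)) : ℝ)))

/-- Operator (spectral) norm of a matrix. -/
def matOpNorm {ι : Type*} [Fintype ι] [DecidableEq ι] (M : Matrix ι ι ℝ) : ℝ :=
  ‖Matrix.toEuclideanCLM (𝕜 := ℝ) M‖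

open Real

lemma lintegral_ofReal_exp_sum_neg_mul_sq {ι : Type*} [Fintype ι] {a : ι → ℝ}
    (ha : ∀ i, 0 < a i) :
    ∫⁻ y : EuclideanSpace ℝ ι, ENNReal.ofReal (exp (∑ i, -a i * y i ^ 2)) =
      ENNReal.ofReal (∏ i, sqrt (π / a i)) := by
  rw [← (EuclideanSpace.volume_preserving_symm_measurableEquiv_toLp ι).symm.lintegral_comp
    (by fun_prop)]
  have hint : Integrable (fun y : ι → ℝ => ∏ i, exp (-a i * y i ^ 2)) :=
    Integrable.fintype_prod_dep fun i => integrable_exp_neg_mul_sq (ha i)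
  calc ∫⁻ y : ι → ℝ, ENNReal.ofReal (exp (∑ i, -a i * y i ^ 2))
      = ENNReal.ofReal (∫ y : ι → ℝ, ∏ i, exp (-a i * y i ^ 2)) := by
        simp_rw [exp_sum]
        exact (ofReal_integral_eq_lintegral_ofReal hint
          (ae_of_all _ fun y => Finset.prod_nonneg fun i _ => (exp_pos _).le)).symm
    _ = ENNReal.ofReal (∏ i, sqrt (π / a i)) := by
        rw [integral_fintype_prod_volume_eq_prod (f := fun i t => exp (-a i * t ^ 2))]
        simp_rw [integral_gaussian]

lemma inv_sqrt_two_pi_mul_mul_sqrt_pi_div {v s : ℝ} (hv : 0 < v) (hs : 2 * s * v < 1) :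
    (sqrt (2 * π * v))⁻¹ * sqrt (π / ((2 * v)⁻¹ - s)) = sqrt ((1 - 2 * s * v)⁻¹) := by
  have hpos : 0 < 1 - 2 * s * v := by linarith
  rw [← sqrt_inv, ← sqrt_mul (by positivity)]
  congr 1
  rw [show (2 * v)⁻¹ - s = (1 - 2 * s * v) / (2 * v) by field_simp]
  field_simp

lemma sqrt_inv_one_sub_le_exp {t c : ℝ} (ht : 0 ≤ t) (htc : t ≤ c) (hc : c < 1) :
    sqrt ((1 - t)⁻¹) ≤ exp (t / (2 * (1 - c))) := by
  have h1t : 0 < 1 - t := by linarith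
  have hinv : (1 - t)⁻¹ ≤ exp (t / (1 - c)) :=
    calc (1 - t)⁻¹ = t / (1 - t) + 1 := by field_simp; ring
      _ ≤ t / (1 - c) + 1 := by gcongr
      _ ≤ exp (t / (1 - c)) := add_one_le_exp _
  calc sqrt ((1 - t)⁻¹) ≤ sqrt (exp (t / (1 - c))) := sqrt_le_sqrt hinv
    _ = exp (t / (2 * (1 - c))) := by rw [← exp_half, div_div, mul_comm]

lemma measure_lt_norm_le_exp_mul_lintegral {E : Type*} [NormedAddCommGroup E]
    [MeasurableSpace E] [OpensMeasurableSpace E] (μ : Measure E) {s ε : ℝ} (hs : 0 ≤ s)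
    (hε : 0 ≤ ε) :
    μ {x | ε < ‖x‖} ≤
      ENNReal.ofReal (exp (-(s * ε ^ 2))) * ∫⁻ x, ENNReal.ofReal (exp (s * ‖x‖ ^ 2)) ∂μ := by
  have hsub : {x : E | ε < ‖x‖} ⊆
      {x | ENNReal.ofReal (exp (s * ε ^ 2)) ≤ ENNReal.ofReal (exp (s * ‖x‖ ^ 2))} :=
    fun x hx => ENNReal.ofReal_le_ofReal <| exp_le_exp.2 <|
      mul_le_mul_of_nonneg_left (pow_le_pow_left₀ hε (le_of_lt hx) 2) hs
  have hinv : ENNReal.ofReal (exp (-(s * ε ^ 2))) * ENNReal.ofReal (exp (s * ε ^ 2)) = 1 := by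
    rw [← ENNReal.ofReal_mul (exp_pos _).le, ← exp_add, neg_add_cancel, exp_zero,
      ENNReal.ofReal_one]
  calc μ {x | ε < ‖x‖}
      ≤ ENNReal.ofReal (exp (-(s * ε ^ 2))) * (ENNReal.ofReal (exp (s * ε ^ 2)) *
          μ {x | ENNReal.ofReal (exp (s * ε ^ 2)) ≤ ENNReal.ofReal (exp (s * ‖x‖ ^ 2))}) := by
        rw [← mul_assoc, hinv, one_mul]; exact measure_mono hsub
    _ ≤ _ := by gcongr; exact mul_meas_ge_le_lintegral (by fun_prop) _

namespace Matrix.IsHermitian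

variable {ι : Type*} [Fintype ι] [DecidableEq ι] {A : Matrix ι ι ℝ} (hA : A.IsHermitian)
include hA

lemma toEuclideanCLM_eigenvectorBasis (i : ι) :
    toEuclideanCLM (𝕜 := ℝ) A (hA.eigenvectorBasis i) =
      hA.eigenvalues i • hA.eigenvectorBasis i :=
  congrArg (WithLp.toLp 2) (hA.mulVec_eigenvectorBasis i)

lemma eigenvalues_le_matOpNorm (i : ι) : hA.eigenvalues i ≤ matOpNorm A := by
  have h := (toEuclideanCLM (𝕜 := ℝ) A).le_opNorm (hA.eigenvectorBasis i)
  rw [hA.toEuclideanCLM_eigenvectorBasis, norm_smul, hA.eigenvectorBasis.orthonormal.1 i,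
    mul_one, mul_one, Real.norm_eq_abs] at h
  exact (le_abs_self _).trans h

end Matrix.IsHermitian

namespace Matrix.PosDef

variable {ι : Type*} [Fintype ι] [DecidableEq ι] {S : Matrix ι ι ℝ} (hS : S.PosDef)
include hS

lemma toEuclideanCLM_inv_eigenvectorBasis (i : ι) :
    toEuclideanCLM (𝕜 := ℝ) S⁻¹ (hS.1.eigenvectorBasis i) =
      (hS.1.eigenvalues i)⁻¹ • hS.1.eigenvectorBasis i := by
  have h : S⁻¹ *ᵥ (S *ᵥ hS.1.eigenvectorBasis i) = hS.1.eigenvectorBasis i := by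
    rw [mulVec_mulVec, nonsing_inv_mul S (isUnit_iff_ne_zero.mpr hS.det_pos.ne'), one_mulVec]
  rw [hS.1.mulVec_eigenvectorBasis, mulVec_smul] at h
  exact congrArg (WithLp.toLp 2) ((eq_inv_smul_iff₀ (hS.eigenvalues_pos i).ne').2 h)

lemma inner_toEuclideanCLM_inv_repr_symm (y : EuclideanSpace ℝ ι) :
    inner ℝ (hS.1.eigenvectorBasis.repr.symm y)
        (toEuclideanCLM (𝕜 := ℝ) S⁻¹ (hS.1.eigenvectorBasis.repr.symm y)) =
      ∑ i, (hS.1.eigenvalues i)⁻¹ * y i ^ 2 := by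
  set b := hS.1.eigenvectorBasis
  have hSy : toEuclideanCLM (𝕜 := ℝ) S⁻¹ (b.repr.symm y) =
      ∑ i, ((hS.1.eigenvalues i)⁻¹ * y i) • b i := by
    rw [← b.sum_repr_symm y, map_sum]
    simp only [b, map_smul, hS.toEuclideanCLM_inv_eigenvectorBasis, smul_smul, mul_comm]
  have hcoord : ∀ i, inner ℝ (b.repr.symm y) (b i) = y i := fun i => by
    rw [real_inner_comm, ← b.repr_apply_apply, LinearIsometryEquiv.apply_symm_apply]
  rw [hSy, inner_sum]
  exact Finset.sum_congr rfl fun i _ => by rw [real_inner_smul_right, hcoord]; ring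

lemma inv_sqrt_two_pi_pow_mul_det_eq_prod :
    (sqrt ((2 * π) ^ Fintype.card ι * S.det))⁻¹ = ∏ i, (sqrt (2 * π * hS.1.eigenvalues i))⁻¹ := by
  have hdet : S.det = ∏ i, hS.1.eigenvalues i := by simpa using hS.1.det_eq_prod_eigenvalues
  rw [hdet, ← Finset.card_univ, ← Finset.prod_const, ← Finset.prod_mul_distrib,
    sqrt_prod _ fun i _ => by have := hS.eigenvalues_pos i; positivity, Finset.prod_inv_distrib]

lemma lintegral_exp_mul_norm_sq_gaussianMeasure {s : ℝ}
    (hs : ∀ i, 2 * s * hS.1.eigenvalues i < 1) :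
    ∫⁻ x, ENNReal.ofReal (exp (s * ‖x‖ ^ 2)) ∂gaussianMeasure 0 S =
      ENNReal.ofReal (∏ i, sqrt ((1 - 2 * s * hS.1.eigenvalues i)⁻¹)) := by
  have ha : ∀ i, 0 < (2 * hS.1.eigenvalues i)⁻¹ - s := fun i => by
    have := hS.eigenvalues_pos i
    rw [sub_pos, ← one_div, lt_div_iff₀ (by positivity)]
    linarith [hs i]
  rw [gaussianMeasure]
  set c := (sqrt ((2 * π) ^ Fintype.card ι * S.det))⁻¹ with hc
  have hdiag : ∀ y : EuclideanSpace ℝ ι,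
      ENNReal.ofReal (c * exp (-(1 / 2) * inner ℝ (hS.1.eigenvectorBasis.repr.symm y - 0)
          (toEuclideanCLM (𝕜 := ℝ) S⁻¹ (hS.1.eigenvectorBasis.repr.symm y - 0)))) *
        ENNReal.ofReal (exp (s * ‖hS.1.eigenvectorBasis.repr.symm y‖ ^ 2)) =
      ENNReal.ofReal c *
        ENNReal.ofReal (exp (∑ i, -((2 * hS.1.eigenvalues i)⁻¹ - s) * y i ^ 2)) := by
    intro y
    rw [sub_zero, hS.inner_toEuclideanCLM_inv_repr_symm, LinearIsometryEquiv.norm_map,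
      EuclideanSpace.norm_sq_eq, ← ENNReal.ofReal_mul (by positivity),
      ← ENNReal.ofReal_mul (by positivity), mul_assoc, ← exp_add, Finset.mul_sum, Finset.mul_sum,
      ← Finset.sum_add_distrib]
    congr 4 with i
    have := (hS.eigenvalues_pos i).ne'
    rw [Real.norm_eq_abs, sq_abs]
    field_simp
    ring
  rw [lintegral_withDensity_eq_lintegral_mul _ (by fun_prop) (by fun_prop),
    ← hS.1.eigenvectorBasis.measurePreserving_repr_symm.lintegral_comp (by fun_prop)]
  simp only [Pi.mul_apply, hdiag]
  rw [lintegral_const_mul' _ _ ENNReal.ofReal_ne_top, lintegral_ofReal_exp_sum_neg_mul_sq ha,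
    ← ENNReal.ofReal_mul (by positivity), hc, hS.inv_sqrt_two_pi_pow_mul_det_eq_prod,
    ← Finset.prod_mul_distrib]
  simp_rw [inv_sqrt_two_pi_mul_mul_sqrt_pi_div (hS.eigenvalues_pos _) (hs _)]

lemma gaussianMeasure_lt_norm_le {s ε : ℝ} (hs : 0 ≤ s) (hsM : 2 * s * matOpNorm S < 1)
    (hε : 0 ≤ ε) :
    gaussianMeasure 0 S {x | ε < ‖x‖} ≤
      ENNReal.ofReal (exp (-(s * ε ^ 2) + s * S.trace / (1 - 2 * s * matOpNorm S))) := by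
  have hev : ∀ i, 2 * s * hS.1.eigenvalues i ≤ 2 * s * matOpNorm S := fun i => by
    gcongr; exact hS.1.eigenvalues_le_matOpNorm i
  have hprod : ∏ i, sqrt ((1 - 2 * s * hS.1.eigenvalues i)⁻¹) ≤
      exp (s * S.trace / (1 - 2 * s * matOpNorm S)) :=
    calc ∏ i, sqrt ((1 - 2 * s * hS.1.eigenvalues i)⁻¹)
        ≤ ∏ i, exp (2 * s * hS.1.eigenvalues i / (2 * (1 - 2 * s * matOpNorm S))) :=
          Finset.prod_le_prod (fun _ _ => sqrt_nonneg _) fun i _ =>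
            sqrt_inv_one_sub_le_exp (by have := hS.eigenvalues_pos i; positivity) (hev i) hsM
      _ = exp (s * S.trace / (1 - 2 * s * matOpNorm S)) := by
          have htr : S.trace = ∑ i, hS.1.eigenvalues i := by
            simpa using hS.1.trace_eq_sum_eigenvalues
          rw [← exp_sum, htr, Finset.mul_sum, Finset.sum_div]
          simp_rw [mul_assoc (2 : ℝ), mul_div_mul_left _ _ (two_ne_zero' ℝ)]
  calc gaussianMeasure 0 S {x | ε < ‖x‖}
      ≤ ENNReal.ofReal (exp (-(s * ε ^ 2))) *
          ∫⁻ x, ENNReal.ofReal (exp (s * ‖x‖ ^ 2)) ∂gaussianMeasure 0 S :=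
        measure_lt_norm_le_exp_mul_lintegral _ hs hε
    _ ≤ ENNReal.ofReal (exp (-(s * ε ^ 2)) * exp (s * S.trace / (1 - 2 * s * matOpNorm S))) := by
        rw [hS.lintegral_exp_mul_norm_sq_gaussianMeasure fun i => (hev i).trans_lt hsM,
          ← ENNReal.ofReal_mul (exp_pos _).le]
        gcongr
    _ = _ := by rw [exp_add]

end Matrix.PosDef

theorem stmt2 (d : ℕ) (S : Matrix (Fin d) (Fin d) ℝ) (hS : S.PosDef) :
    ∀ ε : ℝ, Real.sqrt S.trace < ε →
      (gaussianMeasure 0 S {x | ε < ‖x‖}).toReal ≤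
        Real.exp (-(1 / 2) * (ε - Real.sqrt S.trace) ^ 2 * (matOpNorm S)⁻¹) := by
  intro ε hε
  rcases isEmpty_or_nonempty (Fin d) with hd | hd
  · have hempty : {x : EuclideanSpace ℝ (Fin d) | ε < ‖x‖} = ∅ := by
      ext x
      simp [Subsingleton.elim x 0, ((sqrt_nonneg _).trans_lt hε).le]
    simp [hempty, (exp_pos _).le]
  set M := matOpNorm S
  set r := sqrt S.trace
  have hM : 0 < M := (hS.eigenvalues_pos (Classical.arbitrary _)).trans_le
    (hS.1.eigenvalues_le_matOpNorm _)
  have hr : 0 < r := sqrt_pos.2 hS.trace_pos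
  have hε0 : 0 < ε := hr.trans hε
  have htr : S.trace = r ^ 2 := (sq_sqrt hS.trace_pos.le).symm
  set s := (ε - r) / (2 * M * ε) with hs
  have hsM : 1 - 2 * s * M = r / ε := by rw [hs]; field_simp; ring
  have hexp : -(s * ε ^ 2) + s * S.trace / (1 - 2 * s * M) = -(1 / 2) * (ε - r) ^ 2 * M⁻¹ := by
    rw [hsM, htr, hs]
    field_simp
    ring
  have hbound := hS.gaussianMeasure_lt_norm_le (s := s)
    (div_nonneg (by linarith) (by positivity)) (by linarith [div_pos hr hε0]) hε0.le
  rw [hexp] at hbound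
  exact ENNReal.toReal_le_of_le_ofReal (exp_pos _).le hbound
end
end

section
/- Let m, u ≥ 1, let g(A) := log det(I_u + AᵀA) for A ∈ ℝ^{m×u}, and write J(A) := (I_u + AᵀA)^{−1}. Then for all A, U ∈ ℝ^{m×u}, the directional derivative of the gradient map satisfies ‖D(∇g)(A)[U]‖_F = ‖2 U J(A) − 2 A J(A)(AᵀU + UᵀA) J(A)‖_F ≤ (2 + 4‖A‖_F²)‖U‖_F. In particular, the operator norm of the Hessian of g at A (viewed as a linear map on ℝ^{m×u} with the Frobenius norm, equivalently the Hessian with respect to vec(A)) is at most 2 + 4‖A‖_F². -/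
/-!
`J = (I + AᵀA)⁻¹` is symmetric and `I - J² = J (2AᵀA + (AᵀA)²) J` is positive semidefinite,
so multiplying by `J` on either side does not increase the Frobenius norm. Hence
`‖U J‖ ≤ ‖U‖` and `‖A J (AᵀU + UᵀA) J‖ ≤ ‖A‖ ‖AᵀU + UᵀA‖ ≤ 2 ‖A‖² ‖U‖`, and the triangle
inequality gives the bound `(2 + 4 ‖A‖²) ‖U‖`.
-/

open Matrix

noncomputable section

/-- Frobenius norm of a matrix. -/
def frobNorm {m u : ℕ} (M : Matrix (Fin m) (Fin u) ℝ) : ℝ :=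
  Real.sqrt (∑ i, ∑ j, M i j ^ 2)

attribute [local instance] Matrix.frobeniusSeminormedAddCommGroup Matrix.frobeniusNormedSpace

lemma frobNorm_eq_norm {m u : ℕ} (M : Matrix (Fin m) (Fin u) ℝ) : frobNorm M = ‖M‖ := by
  simp only [frobNorm, frobenius_norm_def, Real.sqrt_eq_rpow, Real.rpow_two, Real.norm_eq_abs,
    sq_abs]

section Contraction

variable {l n : Type*} [Fintype l] [Fintype n] [DecidableEq n]

lemma dotProduct_vecMul_self_le {X : Matrix n n ℝ} (hX : (1 - X * Xᵀ).PosSemidef) (v : n → ℝ) :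
    (v ᵥ* X) ⬝ᵥ (v ᵥ* X) ≤ v ⬝ᵥ v := by
  have h := hX.dotProduct_mulVec_nonneg v
  rw [star_trivial, sub_mulVec, one_mulVec, dotProduct_sub, ← mulVec_mulVec, dotProduct_mulVec,
    mulVec_transpose] at h
  linarith

lemma frobenius_norm_mul_le_of_posSemidef_one_sub (M : Matrix l n ℝ) {X : Matrix n n ℝ}
    (hX : (1 - X * Xᵀ).PosSemidef) : ‖M * X‖ ≤ ‖M‖ := by
  simp only [frobenius_norm_def, Real.rpow_two, Real.norm_eq_abs, sq_abs]
  gcongr ?_ ^ _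
  refine Finset.sum_le_sum fun i _ => ?_
  simpa [dotProduct, sq, vecMul, mul_apply, mul_comm] using dotProduct_vecMul_self_le hX (M i)

end Contraction

section Resolvent

variable {m n : Type*} [Fintype m] [Fintype n] [DecidableEq n]

lemma transpose_inv_one_add_transpose_mul_self (A : Matrix m n ℝ) :
    ((1 + Aᵀ * A)⁻¹)ᵀ = (1 + Aᵀ * A)⁻¹ := by
  rw [transpose_nonsing_inv, transpose_add, transpose_one, transpose_mul, transpose_transpose]

lemma posSemidef_one_sub_inv_one_add_sq {P : Matrix n n ℝ} (hP : P.PosSemidef) :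
    (1 - (1 + P)⁻¹ * (1 + P)⁻¹).PosSemidef := by
  set S := 1 + P
  have hS : IsUnit S.det := (PosDef.one.add_posSemidef hP).det_pos.ne'.isUnit
  have hSt : (S⁻¹)ᴴ = S⁻¹ := (PosDef.one.add_posSemidef hP).posSemidef.inv.isHermitian
  have h := ((hP.add hP).add (hP.pow 2)).conjTranspose_mul_mul_same S⁻¹
  convert h using 1
  rw [hSt]
  calc 1 - S⁻¹ * S⁻¹ = S⁻¹ * S * (S * S⁻¹) - S⁻¹ * S⁻¹ := by
        rw [nonsing_inv_mul S hS, mul_nonsing_inv S hS, one_mul]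
    _ = S⁻¹ * (P + P + P ^ 2) * S⁻¹ := by simp only [S]; noncomm_ring

end Resolvent

theorem norm_hessian_logDet_le {m n : Type*} [Fintype m] [Fintype n] [DecidableEq n]
    (A U : Matrix m n ℝ) :
    ‖(2 : ℝ) • (U * (1 + Aᵀ * A)⁻¹) -
        (2 : ℝ) • (A * (1 + Aᵀ * A)⁻¹ * (Aᵀ * U + Uᵀ * A) * (1 + Aᵀ * A)⁻¹)‖ ≤
      (2 + 4 * ‖A‖ ^ 2) * ‖U‖ := by
  set J := (1 + Aᵀ * A)⁻¹
  set W := Aᵀ * U + Uᵀ * A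
  have hJt : Jᵀ = J := transpose_inv_one_add_transpose_mul_self A
  have hJ : (1 - J * Jᵀ).PosSemidef := by
    rw [hJt]
    exact posSemidef_one_sub_inv_one_add_sq (by simpa using posSemidef_conjTranspose_mul_self A)
  have hJW : ‖J * W‖ ≤ ‖W‖ := by
    rw [← frobenius_norm_transpose (J * W), transpose_mul, hJt, ← frobenius_norm_transpose W]
    exact frobenius_norm_mul_le_of_posSemidef_one_sub _ hJ
  have hW : ‖W‖ ≤ 2 * ‖A‖ * ‖U‖ := calc
      ‖W‖ ≤ ‖Aᵀ‖ * ‖U‖ + ‖Uᵀ‖ * ‖A‖ :=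
        (norm_add_le _ _).trans (add_le_add (frobenius_norm_mul _ _) (frobenius_norm_mul _ _))
      _ = 2 * ‖A‖ * ‖U‖ := by rw [frobenius_norm_transpose, frobenius_norm_transpose]; ring
  have hAJWJ : ‖A * J * W * J‖ ≤ 2 * ‖A‖ ^ 2 * ‖U‖ := calc
      ‖A * J * W * J‖ ≤ ‖A * (J * W)‖ := by
        rw [← Matrix.mul_assoc]; exact frobenius_norm_mul_le_of_posSemidef_one_sub _ hJ
      _ ≤ ‖A‖ * ‖W‖ := (frobenius_norm_mul _ _).trans (by gcongr)
      _ ≤ ‖A‖ * (2 * ‖A‖ * ‖U‖) := by gcongr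
      _ = 2 * ‖A‖ ^ 2 * ‖U‖ := by ring
  calc _ ≤ 2 * ‖U * J‖ + 2 * ‖A * J * W * J‖ := by
        refine (norm_sub_le _ _).trans ?_; simp only [norm_smul, Real.norm_ofNat, le_refl]
    _ ≤ 2 * ‖U‖ + 2 * (2 * ‖A‖ ^ 2 * ‖U‖) := by
        gcongr; exact frobenius_norm_mul_le_of_posSemidef_one_sub U hJ
    _ = (2 + 4 * ‖A‖ ^ 2) * ‖U‖ := by ring

theorem stmt12_general (m u : ℕ) :
    (∀ A U : Matrix (Fin m) (Fin u) ℝ,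
      frobNorm ((2 : ℝ) • (U * (1 + Aᵀ * A)⁻¹) -
          (2 : ℝ) • (A * (1 + Aᵀ * A)⁻¹ * (Aᵀ * U + Uᵀ * A) * (1 + Aᵀ * A)⁻¹)) ≤
        (2 + 4 * frobNorm A ^ 2) * frobNorm U) ∧
    -- in particular, the Hessian of `g` at `A`, as a linear map in `U` with respect to the
    -- Frobenius norm, has operator norm at most `2 + 4 ‖A‖_F²`
    (∀ A U : Matrix (Fin m) (Fin u) ℝ, frobNorm U ≤ 1 →
      frobNorm ((2 : ℝ) • (U * (1 + Aᵀ * A)⁻¹) -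
          (2 : ℝ) • (A * (1 + Aᵀ * A)⁻¹ * (Aᵀ * U + Uᵀ * A) * (1 + Aᵀ * A)⁻¹)) ≤
        2 + 4 * frobNorm A ^ 2) := by
  simp only [frobNorm_eq_norm]
  exact ⟨norm_hessian_logDet_le, fun A U hU =>
    (norm_hessian_logDet_le A U).trans (mul_le_of_le_one_right (by positivity) hU)⟩

theorem stmt12 (m u : ℕ) (hm : 1 ≤ m) (hu : 1 ≤ u) :
    (∀ A U : Matrix (Fin m) (Fin u) ℝ,
      frobNorm ((2 : ℝ) • (U * (1 + Aᵀ * A)⁻¹) -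
          (2 : ℝ) • (A * (1 + Aᵀ * A)⁻¹ * (Aᵀ * U + Uᵀ * A) * (1 + Aᵀ * A)⁻¹)) ≤
        (2 + 4 * frobNorm A ^ 2) * frobNorm U) ∧
    -- in particular, the Hessian of `g` at `A`, as a linear map in `U` with respect to the
    -- Frobenius norm, has operator norm at most `2 + 4 ‖A‖_F²`
    (∀ A U : Matrix (Fin m) (Fin u) ℝ, frobNorm U ≤ 1 →
      frobNorm ((2 : ℝ) • (U * (1 + Aᵀ * A)⁻¹) -
          (2 : ℝ) • (A * (1 + Aᵀ * A)⁻¹ * (Aᵀ * U + Uᵀ * A) * (1 + Aᵀ * A)⁻¹)) ≤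
        2 + 4 * frobNorm A ^ 2) :=
  stmt12_general m u
end
end

section
/- Let d ≥ 1, n, δ, M₁, δ̄ > 0, and let ℓ : ℝ^d → ℝ be three times continuously differentiable on the closed ball B̄(x̄, δ̄) := {x : ‖x − x̄‖ ≤ δ̄}, with ∇ℓ(x̄) = 0. Suppose −∇²ℓ(x) ⪰ nδ I_d and ‖ℓ'''(x)‖* ≤ n M₁ for every x ∈ B̄(x̄, δ̄). Then for every ρ ∈ (0, δ̄] and every x with ρ ≤ ‖x − x̄‖ ≤ δ̄, (ℓ(x) − ℓ(x̄))/n ≤ −min{ (δ/2)ρ² − (M₁/6)ρ³, (δ/2)δ̄² − (M₁/6)δ̄³ }. In particular, the right-hand side is strictly negative whenever δ̄ < 3δ/M₁. -/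
/-!
Along the segment `t ↦ x̄ + t • (x - x̄)` the restriction of `ℓ` has vanishing derivative at `t = 0`
and second derivative at most `-nδ‖x - x̄‖²`, so `ℓ x - ℓ x̄ ≤ -nδ‖x - x̄‖² / 2`. Since `ρ ≤ ‖x - x̄‖`
and the cubic terms are nonnegative, this already lies below the stated bound; the sign claim is the
factorisation `δρ²/2 - M₁ρ³/6 = ρ²(3δ - M₁ρ)/6`.
-/

open Metric Set InnerProductSpace

theorem le_sub_half_mul_sq_of_deriv_deriv_le {φ φ' φ'' : ℝ → ℝ} {b c : ℝ}
    (hφ : ContinuousOn φ (Icc 0 b)) (hφ' : ∀ t ∈ Ico 0 b, HasDerivAt φ (φ' t) t)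
    (hφ'' : ∀ t ∈ Ico 0 b, HasDerivAt φ' (φ'' t) t) (h0 : φ' 0 = 0)
    (hle : ∀ t ∈ Ico 0 b, φ'' t ≤ -c) :
    ∀ t ∈ Icc 0 b, φ t ≤ φ 0 - c / 2 * t ^ 2 := by
  have hslope : ∀ t ∈ Ico 0 b, φ' t ≤ -c * t := fun t ht =>
    image_le_of_deriv_right_le_deriv_boundary (a := 0) (b := t) (B := fun s => -c * s)
      (fun s hs => (hφ'' s ⟨hs.1, hs.2.trans_lt ht.2⟩).continuousAt.continuousWithinAt)
      (fun s hs => (hφ'' s ⟨hs.1, hs.2.trans ht.2⟩).hasDerivWithinAt) (by simp [h0])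
      (by fun_prop) (fun s _ => ((hasDerivAt_id s).const_mul (-c)).hasDerivWithinAt)
      (fun s hs => by simpa using hle s ⟨hs.1, hs.2.trans ht.2⟩) ⟨ht.1, le_rfl⟩
  refine image_le_of_deriv_right_le_deriv_boundary hφ (fun t ht => (hφ' t ht).hasDerivWithinAt)
    (by simp) (by fun_prop) (fun t _ => ?_) hslope
  exact ((((hasDerivAt_pow 2 t).const_mul (c / 2)).const_sub (φ 0)).congr_deriv
    (by push_cast; ring)).hasDerivWithinAt

variable {E : Type*} [NormedAddCommGroup E] [InnerProductSpace ℝ E]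

theorem ContDiffAt.differentiableAt_gradient [CompleteSpace E] {f : E → ℝ} {x : E}
    (hf : ContDiffAt ℝ 2 f x) :
    DifferentiableAt ℝ (gradient f) x :=
  (toDual ℝ E).symm.toContinuousLinearEquiv.differentiableAt.comp x
    ((hf.fderiv_right (m := 1) (by norm_num)).differentiableAt one_ne_zero)

theorem add_smul_sub_mem_ball {x₀ x : E} {r t : ℝ} (hx : x ∈ closedBall x₀ r) (hne : x ≠ x₀)
    (ht : t ∈ Ico (0 : ℝ) 1) : x₀ + t • (x - x₀) ∈ ball x₀ r := by
  rw [mem_ball_iff_norm, add_sub_cancel_left, norm_smul, Real.norm_of_nonneg ht.1]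
  calc t * ‖x - x₀‖ < 1 * ‖x - x₀‖ := by gcongr; exacts [norm_pos_iff.2 (sub_ne_zero.2 hne), ht.2]
    _ ≤ r := by simpa using mem_closedBall_iff_norm.1 hx

theorem sub_le_neg_half_mul_sq_of_inner_fderiv_gradient_le [CompleteSpace E] {f : E → ℝ}
    {x₀ x : E} {r c : ℝ}
    (hf : ContDiffOn ℝ 2 f (closedBall x₀ r)) (hgrad : gradient f x₀ = 0)
    (hcurv : ∀ y ∈ ball x₀ r, ∀ v, ⟪v, fderiv ℝ (gradient f) y v⟫_ℝ ≤ -(c * ‖v‖ ^ 2))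
    (hx : x ∈ closedBall x₀ r) : f x - f x₀ ≤ -(c / 2 * ‖x - x₀‖ ^ 2) := by
  obtain rfl | hne := eq_or_ne x x₀
  · simp
  set u := x - x₀
  set γ : ℝ → E := fun t => x₀ + t • u
  have hγ : ∀ t, HasDerivAt γ u t := fun t => by
    simpa [γ] using ((hasDerivAt_id t).smul_const u).const_add x₀
  have hsmooth : ∀ t ∈ Ico (0 : ℝ) 1, ContDiffAt ℝ 2 f (γ t) := fun t ht =>
    hf.contDiffAt (closedBall_mem_nhds_of_mem (add_smul_sub_mem_ball hx hne ht))
  have hφ : ContinuousOn (fun t => f (γ t)) (Icc 0 1) := by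
    refine hf.continuousOn.comp (by fun_prop) fun t ht => ?_
    rw [mem_closedBall_iff_norm, add_sub_cancel_left, norm_smul, Real.norm_of_nonneg ht.1]
    exact (mul_le_of_le_one_left (norm_nonneg _) ht.2).trans (mem_closedBall_iff_norm.1 hx)
  have hφ' : ∀ t ∈ Ico (0 : ℝ) 1, HasDerivAt (fun t => f (γ t)) ⟪gradient f (γ t), u⟫_ℝ t :=
    fun t ht => by
      rw [inner_gradient_left]
      exact ((hsmooth t ht).differentiableAt (by norm_num)).hasFDerivAt.comp_hasDerivAt t (hγ t)
  have hφ'' : ∀ t ∈ Ico (0 : ℝ) 1, HasDerivAt (fun t => ⟪gradient f (γ t), u⟫_ℝ)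
      ⟪fderiv ℝ (gradient f) (γ t) u, u⟫_ℝ t := fun t ht =>
    (((hsmooth t ht).differentiableAt_gradient.hasFDerivAt.comp_hasDerivAt t (hγ t))).inner ℝ
      (hasDerivAt_const t u) |>.congr_deriv (by simp)
  have hle : ∀ t ∈ Ico (0 : ℝ) 1, ⟪fderiv ℝ (gradient f) (γ t) u, u⟫_ℝ ≤ -(c * ‖u‖ ^ 2) :=
    fun t ht => real_inner_comm u _ ▸ hcurv _ (add_smul_sub_mem_ball hx hne ht) u
  have := le_sub_half_mul_sq_of_deriv_deriv_le hφ hφ' hφ'' (by simp [γ, hgrad]) hle 1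
    ⟨zero_le_one, le_rfl⟩
  simp only [γ, u, one_smul, zero_smul, add_zero, add_sub_cancel] at this
  linarith

theorem half_mul_sq_sub_sixth_mul_cube_pos {δ M ρ : ℝ} (hρ : 0 < ρ) (h : M * ρ < 3 * δ) :
    0 < δ / 2 * ρ ^ 2 - M / 6 * ρ ^ 3 := by
  have hfactor : δ / 2 * ρ ^ 2 - M / 6 * ρ ^ 3 = ρ ^ 2 / 6 * (3 * δ - M * ρ) := by ring
  rw [hfactor]
  exact mul_pos (by positivity) (by linarith)

theorem stmt16_general (d : ℕ) (n δ M₁ dbar : ℝ)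
    (hn : 0 < n) (hδ : 0 < δ) (hM₁ : 0 < M₁)
    (ℓ : EuclideanSpace ℝ (Fin d) → ℝ) (xbar : EuclideanSpace ℝ (Fin d))
    (hC3 : ContDiffOn ℝ 3 ℓ (Metric.closedBall xbar dbar))
    (hgrad : gradient ℓ xbar = 0)
    (hcurv : ∀ x ∈ Metric.closedBall xbar dbar, ∀ v : EuclideanSpace ℝ (Fin d),
      (inner ℝ v ((fderiv ℝ (gradient ℓ) x) v) : ℝ) ≤ -(n * δ * ‖v‖ ^ 2)) :
    ∀ ρ : ℝ, 0 < ρ → ρ ≤ dbar →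
      (∀ x : EuclideanSpace ℝ (Fin d), ρ ≤ ‖x - xbar‖ → ‖x - xbar‖ ≤ dbar →
        (ℓ x - ℓ xbar) / n ≤
          -min (δ / 2 * ρ ^ 2 - M₁ / 6 * ρ ^ 3) (δ / 2 * dbar ^ 2 - M₁ / 6 * dbar ^ 3)) ∧
      (dbar < 3 * δ / M₁ →
        -min (δ / 2 * ρ ^ 2 - M₁ / 6 * ρ ^ 3) (δ / 2 * dbar ^ 2 - M₁ / 6 * dbar ^ 3) < 0) := by
  intro ρ hρ hρd
  refine ⟨fun x hρx hxd => ?_, fun hdbar => ?_⟩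
  · have hdecay := sub_le_neg_half_mul_sq_of_inner_fderiv_gradient_le (hC3.of_le (by norm_num))
      hgrad (fun y hy => hcurv y (ball_subset_closedBall hy)) (mem_closedBall_iff_norm.2 hxd)
    have hmin : min (δ / 2 * ρ ^ 2 - M₁ / 6 * ρ ^ 3) (δ / 2 * dbar ^ 2 - M₁ / 6 * dbar ^ 3) ≤
        δ / 2 * ‖x - xbar‖ ^ 2 :=
      (min_le_left _ _).trans (by nlinarith [pow_pos hρ 3, pow_le_pow_left₀ hρ.le hρx 2])
    calc (ℓ x - ℓ xbar) / n ≤ -(δ / 2 * ‖x - xbar‖ ^ 2) := by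
          rw [div_le_iff₀ hn]; linarith
      _ ≤ _ := neg_le_neg hmin
  · have hMd : M₁ * dbar < 3 * δ := by rwa [lt_div_iff₀ hM₁, mul_comm] at hdbar
    have hMρ : M₁ * ρ < 3 * δ := (mul_le_mul_of_nonneg_left hρd hM₁.le).trans_lt hMd
    exact neg_neg_of_pos (lt_min (half_mul_sq_sub_sixth_mul_cube_pos hρ hMρ)
      (half_mul_sq_sub_sixth_mul_cube_pos (hρ.trans_le hρd) hMd))

theorem stmt16 (d : ℕ) (hd : 1 ≤ d) (n δ M₁ dbar : ℝ)
    (hn : 0 < n) (hδ : 0 < δ) (hM₁ : 0 < M₁) (hdbar : 0 < dbar)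
    (ℓ : EuclideanSpace ℝ (Fin d) → ℝ) (xbar : EuclideanSpace ℝ (Fin d))
    (hC3 : ContDiffOn ℝ 3 ℓ (Metric.closedBall xbar dbar))
    (hgrad : gradient ℓ xbar = 0)
    (hcurv : ∀ x ∈ Metric.closedBall xbar dbar, ∀ v : EuclideanSpace ℝ (Fin d),
      (inner ℝ v ((fderiv ℝ (gradient ℓ) x) v) : ℝ) ≤ -(n * δ * ‖v‖ ^ 2))
    (h3 : ∀ x ∈ Metric.closedBall xbar dbar, ‖iteratedFDeriv ℝ 3 ℓ x‖ ≤ n * M₁) :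
    ∀ ρ : ℝ, 0 < ρ → ρ ≤ dbar →
      (∀ x : EuclideanSpace ℝ (Fin d), ρ ≤ ‖x - xbar‖ → ‖x - xbar‖ ≤ dbar →
        (ℓ x - ℓ xbar) / n ≤
          -min (δ / 2 * ρ ^ 2 - M₁ / 6 * ρ ^ 3) (δ / 2 * dbar ^ 2 - M₁ / 6 * dbar ^ 3)) ∧
      (dbar < 3 * δ / M₁ →
        -min (δ / 2 * ρ ^ 2 - M₁ / 6 * ρ ^ 3) (δ / 2 * dbar ^ 2 - M₁ / 6 * dbar ^ 3) < 0) :=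
  stmt16_general d n δ M₁ dbar hn hδ hM₁ ℓ xbar hC3 hgrad hcurv
end
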